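/- arXiv:2602.13809 — 4 statements merged into one kernel-verified Lean document; each statement's English description precedes it below -/
import Mathlib

section
/- Let R be a commutative ring and S a multiplicative subset of R. Consider a commutative diagram of R-modules with rows A → B → C → D → E and A' → B' → C' → D' → E', vertical maps f_A, f_B, f_C, f_D, f_E making all squares commute, where both rows are u-S-exact at each of their three interior positions. If f_A, f_B, f_D, f_E are all u-S-isomorphisms, then f_C is a u-S-isomorphism. -/
/-- An `R`-module `T` is uniformly `S`-torsion if a single `s ∈ S` annihilates it. -/
def IsUSTorsion (R : Type*) [CommRing R] (S : Submonoid R)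
    (T : Type*) [AddCommGroup T] [Module R T] : Prop :=
  ∃ s ∈ S, ∀ x : T, s • x = 0

/-- `f` is a `u`-`S`-monomorphism: its kernel is `u`-`S`-torsion. -/
def IsUSMono {R : Type*} [CommRing R] (S : Submonoid R)
    {M N : Type*} [AddCommGroup M] [Module R M]
    [AddCommGroup N] [Module R N] (f : M →ₗ[R] N) : Prop :=
  ∃ s ∈ S, ∀ x ∈ LinearMap.ker f, s • x = (0 : M)

/-- `f` is a `u`-`S`-epimorphism: its cokernel is `u`-`S`-torsion. -/
def IsUSEpi {R : Type*} [CommRing R] (S : Submonoid R)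
    {M N : Type*} [AddCommGroup M] [Module R M]
    [AddCommGroup N] [Module R N] (f : M →ₗ[R] N) : Prop :=
  ∃ s ∈ S, ∀ y : N, s • y ∈ LinearMap.range f

/-- `f` is a `u`-`S`-isomorphism: both a `u`-`S`-monomorphism and a `u`-`S`-epimorphism. -/
def IsUSIso {R : Type*} [CommRing R] (S : Submonoid R)
    {M N : Type*} [AddCommGroup M] [Module R M]
    [AddCommGroup N] [Module R N] (f : M →ₗ[R] N) : Prop :=
  IsUSMono S f ∧ IsUSEpi S f

/-- The sequence `M →f N →g L` is `u`-`S`-exact at `N`. -/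
def IsUSExact {R : Type*} [CommRing R] (S : Submonoid R)
    {M N L : Type*} [AddCommGroup M] [Module R M] [AddCommGroup N] [Module R N]
    [AddCommGroup L] [Module R L] (f : M →ₗ[R] N) (g : N →ₗ[R] L) : Prop :=
  ∃ s ∈ S, (∀ x ∈ LinearMap.ker g, s • x ∈ LinearMap.range f) ∧
    (∀ x ∈ LinearMap.range f, s • x ∈ LinearMap.ker g)

/-- The `u`-`S`-Five Lemma: if `f_A, f_B, f_D, f_E` are `u`-`S`-isomorphisms, then so is
`f_C`. -/
theorem uS_five_lemma
    {R : Type*} [CommRing R] (S : Submonoid R)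
    {A B C D E A' B' C' D' E' : Type*}
    [AddCommGroup A] [Module R A] [AddCommGroup B] [Module R B]
    [AddCommGroup C] [Module R C] [AddCommGroup D] [Module R D]
    [AddCommGroup E] [Module R E]
    [AddCommGroup A'] [Module R A'] [AddCommGroup B'] [Module R B']
    [AddCommGroup C'] [Module R C'] [AddCommGroup D'] [Module R D']
    [AddCommGroup E'] [Module R E']
    (g₁ : A →ₗ[R] B) (g₂ : B →ₗ[R] C) (g₃ : C →ₗ[R] D) (g₄ : D →ₗ[R] E)
    (h₁ : A' →ₗ[R] B') (h₂ : B' →ₗ[R] C') (h₃ : C' →ₗ[R] D') (h₄ : D' →ₗ[R] E')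
    (fA : A →ₗ[R] A') (fB : B →ₗ[R] B') (fC : C →ₗ[R] C')
    (fD : D →ₗ[R] D') (fE : E →ₗ[R] E')
    (comm₁ : fB.comp g₁ = h₁.comp fA) (comm₂ : fC.comp g₂ = h₂.comp fB)
    (comm₃ : fD.comp g₃ = h₃.comp fC) (comm₄ : fE.comp g₄ = h₄.comp fD)
    (exB : IsUSExact S g₁ g₂) (exC : IsUSExact S g₂ g₃) (exD : IsUSExact S g₃ g₄)
    (exB' : IsUSExact S h₁ h₂) (exC' : IsUSExact S h₂ h₃) (exD' : IsUSExact S h₃ h₄)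
    (hA : IsUSIso S fA) (hB : IsUSIso S fB) (hD : IsUSIso S fD) (hE : IsUSIso S fE) :
    IsUSIso S fC := by
  obtain ⟨⟨sA, hsA, hAmono⟩, ⟨tA, htA, hAepi⟩⟩ := hA
  obtain ⟨⟨sB, hsB, hBmono⟩, ⟨tB, htB, hBepi⟩⟩ := hB
  obtain ⟨⟨sD, hsD, hDmono⟩, ⟨tD, htD, hDepi⟩⟩ := hD
  obtain ⟨⟨sE, hsE, hEmono⟩, _⟩ := hE
  obtain ⟨eB, heB, heB1, heB2⟩ := exB
  obtain ⟨eC, heC, heC1, heC2⟩ := exC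
  obtain ⟨eD, heD, heD1, heD2⟩ := exD
  obtain ⟨eB', heB', heB'1, heB'2⟩ := exB'
  obtain ⟨eC', heC', heC'1, heC'2⟩ := exC'
  obtain ⟨eD', heD', heD'1, heD'2⟩ := exD'
  have c₁ : ∀ a, fB (g₁ a) = h₁ (fA a) := fun a => LinearMap.congr_fun comm₁ a
  have c₂ : ∀ b, fC (g₂ b) = h₂ (fB b) := fun b => LinearMap.congr_fun comm₂ b
  have c₃ : ∀ c, fD (g₃ c) = h₃ (fC c) := fun c => LinearMap.congr_fun comm₃ c
  have c₄ : ∀ d, fE (g₄ d) = h₄ (fD d) := fun d => LinearMap.congr_fun comm₄ d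
  constructor
  · refine ⟨eB * sB * tA * eB' * eC * sD,
      mul_mem (mul_mem (mul_mem (mul_mem (mul_mem heB hsB) htA) heB') heC) hsD, ?_⟩
    intro c hc
    rw [LinearMap.mem_ker] at hc
    have h1 : g₃ (sD • c) = 0 := by
      rw [map_smul]
      exact hDmono (g₃ c) (by rw [LinearMap.mem_ker, c₃, hc, map_zero])
    obtain ⟨b, hb⟩ := heC1 (sD • c) (LinearMap.mem_ker.mpr h1)
    have h2 : h₂ (fB b) = 0 := by
      rw [← c₂, hb, map_smul, map_smul, hc, smul_zero, smul_zero]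
    obtain ⟨a', ha'⟩ := heB'1 (fB b) (LinearMap.mem_ker.mpr h2)
    obtain ⟨a, ha⟩ := hAepi a'
    have h3 : fB (g₁ a - (tA * eB') • b) = 0 := by
      rw [map_sub, map_smul, c₁, ha, map_smul, ha', mul_smul, sub_self]
    have h4 : sB • (g₁ a - (tA * eB') • b) = 0 := hBmono _ (LinearMap.mem_ker.mpr h3)
    have h5 : (sB * tA * eB') • b = g₁ (sB • a) := by
      have h4' : sB • g₁ a - sB • ((tA * eB') • b) = 0 := by rw [← smul_sub]; exact h4
      have := sub_eq_zero.mp h4'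
      rw [map_smul, this, smul_smul, mul_assoc]
    have h6 : g₂ ((eB * (sB * tA * eB')) • b) = 0 :=
      LinearMap.mem_ker.mp (by rw [mul_smul, h5]; exact heB2 _ ⟨sB • a, rfl⟩)
    rw [map_smul, hb] at h6
    calc (eB * sB * tA * eB' * eC * sD) • c
        = (eB * (sB * tA * eB')) • (eC • sD • c) := by
          rw [smul_smul, smul_smul]; congr 1; ring
      _ = 0 := h6
  · refine ⟨tB * eC' * (eD * sE * eD' * tD),
      mul_mem (mul_mem htB heC') (mul_mem (mul_mem (mul_mem heD hsE) heD') htD), ?_⟩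
    intro c'
    obtain ⟨d, hd⟩ := hDepi (h₃ c')
    have h1 : fE (eD' • g₄ d) = 0 := by
      have := LinearMap.mem_ker.mp (heD'2 (h₃ c') ⟨c', rfl⟩)
      rw [map_smul, c₄, hd, map_smul, smul_comm, ← map_smul, this, smul_zero]
    have h2 : g₄ ((sE * eD') • d) = 0 := by
      rw [map_smul, mul_smul]
      exact hEmono _ (LinearMap.mem_ker.mpr h1)
    obtain ⟨c, hcd⟩ := heD1 _ (LinearMap.mem_ker.mpr h2)
    have h3 : h₃ (fC c - (eD * (sE * eD') * tD) • c') = 0 := by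
      rw [map_sub, ← c₃, hcd, map_smul, map_smul, hd, sub_eq_zero, smul_smul, smul_smul, map_smul]
    obtain ⟨b', hb'⟩ := heC'1 _ (LinearMap.mem_ker.mpr h3)
    obtain ⟨b, hbb⟩ := hBepi b'
    have h4 : fC (g₂ b) = (tB * eC') • (fC c - (eD * (sE * eD') * tD) • c') := by
      rw [c₂, hbb, map_smul, hb', smul_smul]
    refine ⟨(tB * eC') • c - g₂ b, ?_⟩
    rw [map_sub, map_smul, h4, smul_sub, sub_sub_cancel, smul_smul]
    ring_nf
end

section
/- Let R be a commutative ring, S a multiplicative subset of R, and 0 → L →f M →g N → 0 a u-S-exact sequence of R-modules (i.e. f is a u-S-monomorphism, g is a u-S-epimorphism, and the sequence is u-S-exact at M). Then M is u-S-torsion if and only if both L and N are u-S-torsion. -/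
/-- For a `u`-`S`-exact sequence `0 → L →f M →g N → 0`, the module `M` is
`u`-`S`-torsion iff `L` and `N` are `u`-`S`-torsion. -/
theorem uSTorsion_of_uSExact_sequence
    {R : Type*} [CommRing R] (S : Submonoid R)
    {L M N : Type*} [AddCommGroup L] [Module R L] [AddCommGroup M] [Module R M]
    [AddCommGroup N] [Module R N]
    (f : L →ₗ[R] M) (g : M →ₗ[R] N)
    (hf : IsUSMono S f) (hg : IsUSEpi S g) (hex : IsUSExact S f g) :
    IsUSTorsion R S M ↔ IsUSTorsion R S L ∧ IsUSTorsion R S N := by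
  obtain ⟨sf, hsf, hfk⟩ := hf
  obtain ⟨sg, hsg, hgr⟩ := hg
  obtain ⟨se, hse, hke, hrk⟩ := hex
  constructor
  · rintro ⟨s, hs, hsm⟩
    refine ⟨⟨sf * s, S.mul_mem hsf hs, fun x => ?_⟩, ⟨s * sg, S.mul_mem hs hsg, fun y => ?_⟩⟩
    · have h1 : f (s • x) = 0 := by rw [map_smul, hsm]
      have := hfk (s • x) h1
      rwa [smul_smul] at this
    · obtain ⟨m, hm⟩ := hgr y
      have : (s * sg) • y = g (s • m) := by rw [mul_smul, ← hm, map_smul]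
      rw [this, hsm, map_zero]
  · rintro ⟨⟨sl, hsl, hl⟩, ⟨sn, hsn, hn⟩⟩
    refine ⟨sl * se * sn, S.mul_mem (S.mul_mem hsl hse) hsn, fun m => ?_⟩
    have h1 : sn • m ∈ LinearMap.ker g := by
      simp [LinearMap.mem_ker, hn]
    obtain ⟨l, hl2⟩ := hke (sn • m) h1
    have : (sl * se * sn) • m = f (sl • l) := by
      rw [map_smul, hl2, mul_smul, mul_smul]
    rw [this, hl, map_zero]
end

section
/- Let R be a commutative ring, S a multiplicative subset of R, and f : M → N a u-S-isomorphism of R-modules. Then M is S-finite if and only if N is S-finite. -/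
/-- `M` is `S`-finite: there is a finitely generated submodule `F` of `M` and `s ∈ S`
with `s • M ⊆ F`. -/
def IsSFinite (R : Type*) [CommRing R] (S : Submonoid R)
    (M : Type*) [AddCommGroup M] [Module R M] : Prop :=
  ∃ F : Submodule R M, F.FG ∧ ∃ s ∈ S, ∀ x : M, s • x ∈ F

/-- If `f : M → N` is a `u`-`S`-isomorphism, then `M` is `S`-finite iff `N` is
`S`-finite. -/
theorem sFinite_iff_of_uSIso
    {R : Type*} [CommRing R] (S : Submonoid R)
    {M N : Type*} [AddCommGroup M] [Module R M] [AddCommGroup N] [Module R N]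
    (f : M →ₗ[R] N) (hf : IsUSIso S f) :
    IsSFinite R S M ↔ IsSFinite R S N := by
  obtain ⟨⟨t, htS, ht⟩, ⟨u, huS, hu⟩⟩ := hf
  constructor
  · rintro ⟨F, hFfg, s, hsS, hs⟩
    refine ⟨F.map f, hFfg.map f, s * u, S.mul_mem hsS huS, fun y => ?_⟩
    obtain ⟨x, hx⟩ := hu y
    have : (s * u) • y = f (s • x) := by
      rw [map_smul, hx, mul_smul]
    rw [this]
    exact Submodule.mem_map_of_mem (hs x)
  · rintro ⟨G, hGfg, s, hsS, hs⟩
    obtain ⟨T, hT⟩ := hGfg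
    -- for each y pick a preimage of u • y
    choose g hg using hu
    refine ⟨Submodule.span R (g '' (T : Set N)),
      Submodule.fg_span ((T.finite_toSet).image g), t * (u * s),
      S.mul_mem htS (S.mul_mem huS hsS), fun x => ?_⟩
    have key : ∀ z ∈ Submodule.span R (T : Set N),
        ∃ m ∈ Submodule.span R (g '' (T : Set N)), f m = u • z := by
      intro z hz
      induction hz using Submodule.span_induction with
      | mem y hy =>
        exact ⟨g y, Submodule.subset_span ⟨y, hy, rfl⟩, hg y⟩
      | zero => exact ⟨0, Submodule.zero_mem _, by simp⟩
      | add y z _ _ hy hz =>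
        obtain ⟨m₁, hm₁, hfm₁⟩ := hy
        obtain ⟨m₂, hm₂, hfm₂⟩ := hz
        exact ⟨m₁ + m₂, Submodule.add_mem _ hm₁ hm₂, by
          simp [hfm₁, hfm₂, smul_add]⟩
      | smul a y _ hy =>
        obtain ⟨m, hm, hfm⟩ := hy
        exact ⟨a • m, Submodule.smul_mem _ a hm, by
          rw [map_smul, hfm, smul_comm]⟩
    have hsx : s • f x ∈ Submodule.span R (T : Set N) := by
      rw [hT]; exact hs (f x)
    obtain ⟨m, hm, hfm⟩ := key _ hsx
    have hker : (u * s) • x - m ∈ LinearMap.ker f := by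
      simp only [LinearMap.mem_ker, map_sub, map_smul, hfm, mul_smul, map_smul,
        sub_self]
    have := ht _ hker
    have : (t * (u * s)) • x = t • m := by
      have h := ht _ hker
      rw [smul_sub, sub_eq_zero] at h
      rw [mul_smul]; exact h
    rw [this]
    exact Submodule.smul_mem _ t hm
end

section
/- Let R be a commutative ring and S a multiplicative subset of R. Then R is a u-S-Noetherian ring (i.e. u-S-Noetherian as a module over itself) if and only if every finitely generated R-module is u-S-Noetherian. -/
universe u v

/-- `M` is `u`-`S`-Noetherian: a single `s ∈ S` witnesses `S`-finiteness of all
submodules of `M`. -/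
def IsUSNoetherian (R : Type u) [CommRing R] (S : Submonoid R)
    (M : Type v) [AddCommGroup M] [Module R M] : Prop :=
  ∃ s ∈ S, ∀ N : Submodule R M, ∃ F : Submodule R M,
    F.FG ∧ F ≤ N ∧ ∀ x ∈ N, s • x ∈ F

theorem IsUSNoetherian.of_surjective {R : Type u} [CommRing R] (S : Submonoid R)
    {M : Type v} {N : Type*} [AddCommGroup M] [Module R M] [AddCommGroup N] [Module R N]
    (f : M →ₗ[R] N) (hf : Function.Surjective f)
    (h : IsUSNoetherian R S M) : IsUSNoetherian R S N := by
  obtain ⟨s, hs, H⟩ := h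
  refine ⟨s, hs, fun P => ?_⟩
  obtain ⟨F, hFG, hFle, hF⟩ := H (P.comap f)
  refine ⟨F.map f, hFG.map f, ?_, ?_⟩
  · rw [Submodule.map_le_iff_le_comap]; exact hFle
  · intro x hx
    obtain ⟨y, rfl⟩ := hf x
    rw [← map_smul]
    exact Submodule.mem_map_of_mem (hF y hx)

theorem IsUSNoetherian.prod {R : Type u} [CommRing R] (S : Submonoid R)
    {M N : Type*} [AddCommGroup M] [Module R M] [AddCommGroup N] [Module R N]
    (hM : IsUSNoetherian R S M) (hN : IsUSNoetherian R S N) :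
    IsUSNoetherian R S (M × N) := by
  obtain ⟨s₁, hs₁, H₁⟩ := hM
  obtain ⟨s₂, hs₂, H₂⟩ := hN
  refine ⟨s₁ * s₂, S.mul_mem hs₁ hs₂, fun P => ?_⟩
  obtain ⟨F₂, hF₂fg, hF₂le, hF₂⟩ := H₂ (P.map (LinearMap.snd R M N))
  obtain ⟨F₁, hF₁fg, hF₁le, hF₁⟩ := H₁ (P.comap (LinearMap.inl R M N))
  obtain ⟨T, hT⟩ := hF₂fg
  choose lift hliftP hlift using
    (fun t : T => show ∃ p ∈ P, (LinearMap.snd R M N) p = (t : N) from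
      Submodule.mem_map.1 (hF₂le (hT ▸ Submodule.subset_span t.2)))
  set G : Submodule R (M × N) := Submodule.span R (Set.range lift) with hG
  have hGP : G ≤ P := Submodule.span_le.2 (by rintro _ ⟨t, rfl⟩; exact hliftP t)
  have hGfg : G.FG := Submodule.fg_span (Set.finite_range _)
  have hF₂G : F₂ ≤ G.map (LinearMap.snd R M N) := by
    rw [← hT, Submodule.span_le]
    intro t ht
    exact ⟨lift ⟨t, ht⟩, Submodule.subset_span ⟨⟨t, ht⟩, rfl⟩, hlift ⟨t, ht⟩⟩
  refine ⟨G ⊔ F₁.map (LinearMap.inl R M N), hGfg.sup (hF₁fg.map _), ?_, ?_⟩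
  · refine sup_le hGP ?_
    rw [Submodule.map_le_iff_le_comap]
    exact hF₁le
  · intro x hx
    have hx2 : s₂ • x.2 ∈ F₂ := hF₂ x.2 (Submodule.mem_map_of_mem hx)
    obtain ⟨g, hgG, hg2⟩ := Submodule.mem_map.1 (hF₂G hx2)
    set z : M × N := s₂ • x - g with hz
    have hzP : z ∈ P := P.sub_mem (P.smul_mem _ hx) (hGP hgG)
    have hz2 : z.2 = 0 := by
      simp only [hz, Prod.snd_sub, Prod.smul_snd, sub_eq_zero]; exact hg2.symm
    have hz1 : z.1 ∈ P.comap (LinearMap.inl R M N) := by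
      have : (LinearMap.inl R M N) z.1 = z := by
        ext
        · rfl
        · simp [hz2]
      simpa [Submodule.mem_comap, this] using hzP
    have key : (s₁ * s₂) • x = s₁ • g + (LinearMap.inl R M N) (s₁ • z.1) := by
      have : (LinearMap.inl R M N) (s₁ • z.1) = s₁ • z := by
        ext
        · rfl
        · simp [hz2]
      rw [this, hz, smul_sub, mul_smul]
      abel
    rw [key]
    exact Submodule.add_mem _
      (le_sup_left (α := Submodule R (M × N)) (Submodule.smul_mem _ _ hgG))
      (le_sup_right (α := Submodule R (M × N))
        (Submodule.mem_map_of_mem (hF₁ _ hz1)))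

theorem IsUSNoetherian.subsingleton {R : Type u} [CommRing R] (S : Submonoid R)
    {M : Type v} [AddCommGroup M] [Module R M] [Subsingleton M] :
    IsUSNoetherian R S M := by
  refine ⟨1, S.one_mem, fun N => ⟨⊥, Submodule.fg_bot, bot_le, fun x _ => ?_⟩⟩
  simp [Subsingleton.elim x 0]

/-- The cons linear map `M × (Fin n → M) →ₗ[R] (Fin (n+1) → M)`. -/
def consLinearMap (R : Type u) [CommRing R] (M : Type v) [AddCommGroup M] [Module R M]
    (n : ℕ) : (M × (Fin n → M)) →ₗ[R] (Fin (n + 1) → M) where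
  toFun p := Fin.cons p.1 p.2
  map_add' p q := by
    funext i
    refine Fin.cases ?_ (fun j => ?_) i <;> simp
  map_smul' c p := by
    funext i
    refine Fin.cases ?_ (fun j => ?_) i <;> simp

theorem IsUSNoetherian.pi {R : Type u} [CommRing R] (S : Submonoid R)
    (h : IsUSNoetherian R S R) (n : ℕ) : IsUSNoetherian R S (Fin n → R) := by
  induction n with
  | zero => exact IsUSNoetherian.subsingleton S
  | succ n ih =>
    refine (h.prod S ih).of_surjective S (consLinearMap R R n) ?_
    intro v
    exact ⟨(v 0, fun i => v i.succ), by
      funext i; refine Fin.cases ?_ (fun j => ?_) i <;> simp [consLinearMap]⟩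

/-- `R` is a `u`-`S`-Noetherian ring (i.e. `u`-`S`-Noetherian as a module over itself)
iff every finitely generated `R`-module is `u`-`S`-Noetherian. -/
theorem uSNoetherian_ring_iff_finite_modules_uSNoetherian
    (R : Type u) [CommRing R] (S : Submonoid R) :
    IsUSNoetherian R S R ↔
      ∀ (M : Type u) [AddCommGroup M] [Module R M],
        Module.Finite R M → IsUSNoetherian R S M := by
  constructor
  · intro h M _ _ hfin
    obtain ⟨n, f, hf⟩ := Module.Finite.exists_fin' R M
    exact (h.pi S n).of_surjective S f hf
  · intro h
    exact h R (Module.Finite.self R)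
end
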